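/- arXiv:0811.2117 — 3 statements merged into one kernel-verified Lean document; each statement's English description precedes it below -/
import Mathlib

section
/- Given a disjunctive database D, there exists a unique disjunctive database D_min such that D_min has the same minimal models as D and D_min is contained in every disjunctive database having the same minimal models as D; namely D_min = reduction(D). -/
/-!
Models are upward closed, and every model contains a minimal one, so two databases with the same
minimal models have the same models. Deleting a disjunction that properly contains another one
does not change the models, so `reduction D` has the same minimal models as `D`. Conversely, if
`D'` has the same models as `D` and `d ∈ reduction D`, then every model of `D'` meets `d`; the
model `(⋃ D') \ d` shows that some `d' ∈ D'` satisfies `d' ⊆ d`, and symmetrically some `d'' ∈ D`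
satisfies `d'' ⊆ d'`. Since `d` is minimal in `D`, `d'' = d' = d`, hence `d ∈ D'`.
-/

variable {F : Type*} [DecidableEq F]

/-- M is a model of the disjunctive database D: it meets every disjunction. -/
def IsModel (D : Finset (Finset F)) (M : Finset F) : Prop :=
  ∀ d ∈ D, ∃ t ∈ d, t ∈ M

/-- M is a minimal model of D. -/
def IsMinModel (D : Finset (Finset F)) (M : Finset F) : Prop :=
  IsModel D M ∧ ∀ M' ⊂ M, ¬ IsModel D M'

/-- reduction removes every disjunction properly containing another disjunction of D. -/
def reduction (D : Finset (Finset F)) : Finset (Finset F) :=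
  D.filter (fun d => ∀ d' ∈ D, ¬ d' ⊂ d)

section

omit [DecidableEq F]

lemma isMinModel_iff_minimal {D : Finset (Finset F)} {M : Finset F} :
    IsMinModel D M ↔ Minimal (IsModel D) M :=
  minimal_iff_forall_lt.symm

lemma IsModel.mono {D : Finset (Finset F)} {M N : Finset F} (hM : IsModel D M) (hMN : M ⊆ N) :
    IsModel D N := fun d hd =>
  let ⟨t, htd, htM⟩ := hM d hd
  ⟨t, htd, hMN htM⟩

lemma isModel_iff_of_isMinModel_iff {D D' : Finset (Finset F)}
    (h : ∀ M, IsMinModel D M ↔ IsMinModel D' M) (M : Finset F) :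
    IsModel D M ↔ IsModel D' M := by
  have key : ∀ {A B : Finset (Finset F)}, (∀ M, IsMinModel A M → IsMinModel B M) →
      IsModel A M → IsModel B M := fun hAB hM => by
    obtain ⟨N, hNM, hN⟩ := exists_minimal_le_of_wellFoundedLT _ M hM
    exact (hAB N (isMinModel_iff_minimal.2 hN)).1.mono hNM
  exact ⟨key fun N => (h N).1, key fun N => (h N).2⟩

end

lemma mem_reduction_iff_minimal {D : Finset (Finset F)} {d : Finset F} :
    d ∈ reduction D ↔ Minimal (· ∈ D) d := by
  rw [minimal_iff_forall_lt, reduction, Finset.mem_filter]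
  exact and_congr_right fun _ => ⟨fun h d' hd' hd'D => h d' hd'D hd', fun h d' hd'D hd' => h hd' hd'D⟩

lemma exists_mem_reduction_subset {D : Finset (Finset F)} {d : Finset F} (hd : d ∈ D) :
    ∃ d' ∈ reduction D, d' ⊆ d := by
  obtain ⟨d', hd'd, hd'⟩ := exists_minimal_le_of_wellFoundedLT (· ∈ D) d hd
  exact ⟨d', mem_reduction_iff_minimal.2 hd', hd'd⟩

lemma isModel_reduction_iff {D : Finset (Finset F)} {M : Finset F} :
    IsModel (reduction D) M ↔ IsModel D M := by
  refine ⟨fun h d hd => ?_, fun h d hd => h d (Finset.mem_of_mem_filter d hd)⟩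
  obtain ⟨d', hd', hd'd⟩ := exists_mem_reduction_subset hd
  obtain ⟨t, htd', htM⟩ := h d' hd'
  exact ⟨t, hd'd htd', htM⟩

lemma isMinModel_reduction_iff {D : Finset (Finset F)} {M : Finset F} :
    IsMinModel (reduction D) M ↔ IsMinModel D M := by
  simp only [IsMinModel, isModel_reduction_iff]

lemma exists_mem_subset_of_forall_isModel {D : Finset (Finset F)} {c : Finset F}
    (h : ∀ M, IsModel D M → ∃ t ∈ c, t ∈ M) : ∃ d ∈ D, d ⊆ c := by
  by_contra! hc
  have hmodel : IsModel D (D.biUnion id \ c) := fun d hd => by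
    obtain ⟨t, htd, htc⟩ := Finset.not_subset.1 (hc d hd)
    exact ⟨t, htd, Finset.mem_sdiff.2 ⟨Finset.mem_biUnion.2 ⟨d, hd, htd⟩, htc⟩⟩
  obtain ⟨t, htc, htM⟩ := h _ hmodel
  exact (Finset.mem_sdiff.1 htM).2 htc

lemma reduction_subset_of_isModel_iff {D D' : Finset (Finset F)}
    (h : ∀ M, IsModel D M ↔ IsModel D' M) : reduction D ⊆ D' := by
  intro d hd
  have hdmin := mem_reduction_iff_minimal.1 hd
  obtain ⟨d', hd', hd'd⟩ := exists_mem_subset_of_forall_isModel fun M hM => (h M).2 hM d hdmin.1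
  obtain ⟨d'', hd'', hd''d'⟩ := exists_mem_subset_of_forall_isModel fun M hM => (h M).1 hM d' hd'
  have hdd' : d ⊆ d' := (hdmin.2 hd'' (hd''d'.trans hd'd)).trans hd''d'
  rwa [hd'd.antisymm hdd'] at hd'

theorem stmt3 (D : Finset (Finset F)) (hD : ∀ d ∈ D, d.Nonempty) :
    ∀ Dmin : Finset (Finset F),
      ((∀ d ∈ Dmin, d.Nonempty) ∧
       (∀ M : Finset F, IsMinModel Dmin M ↔ IsMinModel D M) ∧
       (∀ D' : Finset (Finset F), (∀ d ∈ D', d.Nonempty) →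
         (∀ M : Finset F, IsMinModel D' M ↔ IsMinModel D M) → Dmin ⊆ D'))
      ↔ Dmin = reduction D := by
  have hred : ∀ d ∈ reduction D, d.Nonempty := fun d hd => hD d (Finset.mem_of_mem_filter d hd)
  have hleast : ∀ D' : Finset (Finset F), (∀ M, IsMinModel D' M ↔ IsMinModel D M) →
      reduction D ⊆ D' := fun D' h =>
    reduction_subset_of_isModel_iff (isModel_iff_of_isMinModel_iff fun M => (h M).symm)
  intro Dmin
  constructor
  · rintro ⟨-, hmin, hDmin⟩
    exact (hDmin _ hred fun M => isMinModel_reduction_iff).antisymm (hleast Dmin hmin)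
  · rintro rfl
    exact ⟨hred, fun M => isMinModel_reduction_iff, fun D' _ => hleast D'⟩
end

section
/- For a single key constraint, the canonical disjunctive database representing the repairs of a relation r has size exactly |r|: it consists of one disjunction per clique, containing exactly the facts of that clique, and it equals its own reduction, hence it is the unique minimal-size representation. -/
/-!
Distinct cliques are disjoint and nonempty, so none properly contains another and the clique
database is already reduced. For canonicity let `D'` have the same minimal models. Every minimal
model of `D'` meets each clique `C i`, so some `d ∈ D'` lies inside `C i`: otherwise the facts of
`D'` outside `C i` form a model of `D'`, and a minimal model below it misses `C i`. Conversely,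
for `t ∈ C i` the transversal choosing `t` in `C i` is a minimal model of `D'`, and it meets
`d ⊆ C i` only in `t`; hence `d = C i`.
-/

variable {F : Type*} [DecidableEq F]

open Finset Function

theorem IsModel.exists_isMinModel_subset {α : Type*} {D : Finset (Finset α)} {M : Finset α}
    (hM : IsModel D M) : ∃ M₀ ⊆ M, IsMinModel D M₀ := by
  induction M using Finset.strongInduction with
  | H M ih =>
    by_cases h : ∃ M' ⊂ M, IsModel D M'
    · obtain ⟨M', hM'M, hM'⟩ := h
      obtain ⟨M₀, hM₀M', hM₀⟩ := ih M' hM'M hM'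
      exact ⟨M₀, hM₀M'.trans hM'M.subset, hM₀⟩
    · exact ⟨M, subset_rfl, hM, fun M' hM'M hM' => h ⟨M', hM'M, hM'⟩⟩

theorem reduction_eq_self {D : Finset (Finset F)} (hD : ∀ d ∈ D, ∀ d' ∈ D, ¬ d' ⊂ d) :
    reduction D = D :=
  filter_true_of_mem hD

theorem exists_subset_of_forall_isMinModel_isModel {D D' : Finset (Finset F)}
    (h : ∀ M, IsMinModel D' M → IsModel D M) {d : Finset F} (hd : d ∈ D) :
    ∃ d' ∈ D', d' ⊆ d := by
  by_contra! hD'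
  have hmodel : IsModel D' (D'.biUnion id \ d) := fun d' hd' => by
    obtain ⟨x, hxd', hxd⟩ := not_subset.mp (hD' d' hd')
    exact ⟨x, hxd', mem_sdiff.mpr ⟨mem_biUnion.mpr ⟨d', hd', hxd'⟩, hxd⟩⟩
  obtain ⟨M, hMsub, hM⟩ := hmodel.exists_isMinModel_subset
  obtain ⟨x, hxd, hxM⟩ := h M hM d hd
  exact (mem_sdiff.mp (hMsub hxM)).2 hxd

theorem exists_transversal_apply_eq {ι α : Type*} {C : ι → Finset α}
    (hne : ∀ i, (C i).Nonempty) {i : ι} {t : α} (ht : t ∈ C i) :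
    ∃ g : ι → α, (∀ j, g j ∈ C j) ∧ g i = t := by
  classical
  refine ⟨update (fun j => (hne j).choose) i t, fun j => ?_, update_self ..⟩
  obtain rfl | hji := eq_or_ne j i
  · simpa using ht
  · simpa [hji] using (hne j).choose_spec

section Cliques

variable {ι : Type*} [Fintype ι] {C : ι → Finset F}

theorem reduction_image_eq_self (hne : ∀ i, (C i).Nonempty) (hdisj : Pairwise (Disjoint on C)) :
    reduction (univ.image C) = univ.image C := by
  refine reduction_eq_self ?_
  simp only [mem_image, mem_univ, true_and, forall_exists_index, forall_apply_eq_imp_iff]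
  intro i j hji
  obtain rfl | hij := eq_or_ne j i
  · exact ssubset_irrefl _ hji
  · obtain ⟨x, hx⟩ := hne j
    exact disjoint_left.mp (hdisj hij) hx (hji.subset hx)

theorem isMinModel_image_transversal (hdisj : Pairwise (Disjoint on C)) {g : ι → F}
    (hg : ∀ i, g i ∈ C i) : IsMinModel (univ.image C) (univ.image g) := by
  refine ⟨?_, fun M' hM'g hM' => ?_⟩
  · simp only [IsModel, mem_image, mem_univ, true_and, forall_exists_index,
      forall_apply_eq_imp_iff]
    exact fun i => ⟨g i, hg i, i, rfl⟩
  · obtain ⟨_, hxg, hxM'⟩ := exists_of_ssubset hM'g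
    obtain ⟨i, -, rfl⟩ := mem_image.mp hxg
    obtain ⟨y, hyC, hyM'⟩ := hM' (C i) (mem_image_of_mem C (mem_univ i))
    obtain ⟨k, -, rfl⟩ := mem_image.mp (hM'g.subset hyM')
    obtain rfl : k = i := hdisj.eq (not_disjoint_iff.mpr ⟨g k, hg k, hyC⟩)
    exact hxM' hyM'

theorem subset_of_subset_clique (hne : ∀ i, (C i).Nonempty) (hdisj : Pairwise (Disjoint on C))
    {D' : Finset (Finset F)} (h : ∀ M, IsMinModel (univ.image C) M → IsModel D' M)
    {d : Finset F} (hd : d ∈ D') {i : ι} (hdC : d ⊆ C i) : C i ⊆ d := by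
  intro t ht
  obtain ⟨g, hg, hgi⟩ := exists_transversal_apply_eq hne ht
  obtain ⟨y, hyd, hyg⟩ := h _ (isMinModel_image_transversal hdisj hg) d hd
  obtain ⟨k, -, rfl⟩ := mem_image.mp hyg
  obtain rfl : k = i := hdisj.eq (not_disjoint_iff.mpr ⟨g k, hg k, hdC hyd⟩)
  rwa [← hgi]

theorem image_subset_of_isMinModel_iff (hne : ∀ i, (C i).Nonempty)
    (hdisj : Pairwise (Disjoint on C)) {D' : Finset (Finset F)}
    (h : ∀ M, IsMinModel D' M ↔ IsMinModel (univ.image C) M) : univ.image C ⊆ D' := by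
  intro _ hCi
  obtain ⟨i, -, rfl⟩ := mem_image.mp hCi
  obtain ⟨d, hd, hdC⟩ :=
    exists_subset_of_forall_isMinModel_isModel (fun M hM => ((h M).mp hM).1) hCi
  have hCd := subset_of_subset_clique hne hdisj (fun M hM => ((h M).mpr hM).1) hd hdC
  rwa [hdC.antisymm hCd] at hd

end Cliques

theorem stmt7 (n : ℕ) (C : Fin n → Finset F)
    (hne : ∀ i, (C i).Nonempty)
    (hdisj : ∀ i j, i ≠ j → Disjoint (C i) (C j))
    (r : Finset F) (hr : r = Finset.univ.biUnion C) :
    (∑ d ∈ Finset.univ.image C, d.card) = r.card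
    ∧ reduction (Finset.univ.image C) = Finset.univ.image C
    ∧ (∀ D' : Finset (Finset F), (∀ d ∈ D', d.Nonempty) →
        (∀ M : Finset F, IsMinModel D' M ↔ IsMinModel (Finset.univ.image C) M) →
        Finset.univ.image C ⊆ D') := by
  have hdisj' : Pairwise (Disjoint on C) := fun i j => hdisj i j
  refine ⟨?_, reduction_image_eq_self hne hdisj',
    fun D' _ => image_subset_of_isMinModel_iff hne hdisj'⟩
  rw [hr, card_biUnion fun i _ j _ hij => hdisj' hij,
    sum_image_of_disjoint card_empty (hdisj'.set_pairwise _)]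
end

section
/- For the conflict graph on facts {t_{i1}, t_{i2}, t_{i3} : 1 ≤ i ≤ n} with edges {t_{i1}, t_{j1}} (i ≠ j), {t_{i1}, t_{i2}}, {t_{i2}, t_{i3}}, the disjunctive database D = { t_{i2} ∨ t_{i3} : 1 ≤ i ≤ n } ∪ { t_{i1} ∨ t_{i2} ∨ ⋁_{z ≠ i} t_z : 1 ≤ i ≤ n, t_z ∈ {t_{z1}, t_{z3}} } has as its minimal models exactly the maximal conflict-free subsets (repairs). -/
variable {F : Type*} [DecidableEq F]

/-- S is conflict-free w.r.t. a binary conflict relation G. -/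
def ConflictFree (G : F → F → Prop) (S : Finset F) : Prop :=
  ∀ a ∈ S, ∀ b ∈ S, ¬ G a b

/-- S is a repair of V w.r.t. conflict relation G: a maximal conflict-free subset of V. -/
def IsRepairC (V : Finset F) (G : F → F → Prop) (S : Finset F) : Prop :=
  S ⊆ V ∧ ConflictFree G S ∧ ∀ S', S ⊂ S' → S' ⊆ V → ¬ ConflictFree G S'

/-- Conflict relation of the family D_n: facts are (i,k) with k=0,1,2 encoding
    t_{i1}, t_{i2}, t_{i3}. Edges: {t_{i1},t_{j1}} for i≠j, {t_{i1},t_{i2}}, {t_{i2},t_{i3}}. -/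
def ConfDn (n : ℕ) (a b : Fin n × Fin 3) : Prop :=
  (a.2 = 0 ∧ b.2 = 0 ∧ a.1 ≠ b.1) ∨
  (a.1 = b.1 ∧ ((a.2 = 0 ∧ b.2 = 1) ∨ (a.2 = 1 ∧ b.2 = 0) ∨
                (a.2 = 1 ∧ b.2 = 2) ∨ (a.2 = 2 ∧ b.2 = 1)))

/-- The repair {t_{12},...,t_{n2}}. -/
def repA (n : ℕ) : Finset (Fin n × Fin 3) :=
  Finset.univ.image (fun i => (i, (1 : Fin 3)))

/-- The repair {t_{i1}, t_{i3}} ∪ { (j, f j) : j ≠ i } (for f choosing among t_{j2}, t_{j3}). -/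
def repB (n : ℕ) (i : Fin n) (f : Fin n → Fin 3) : Finset (Fin n × Fin 3) :=
  insert (i, (0 : Fin 3)) (insert (i, (2 : Fin 3))
    ((Finset.univ.erase i).image (fun j => (j, f j))))

/-- The disjunctions t_{i2} ∨ t_{i3}. -/
def DnD1 (n : ℕ) : Finset (Finset (Fin n × Fin 3)) :=
  Finset.univ.image (fun i : Fin n => ({(i, (1 : Fin 3)), (i, (2 : Fin 3))} : Finset (Fin n × Fin 3)))

/-- The disjunctions t_{i1} ∨ t_{i2} ∨ ⋁_{z ≠ i} t_z with t_z ∈ {t_{z1}, t_{z3}}. -/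
def DnD2 (n : ℕ) : Finset (Finset (Fin n × Fin 3)) :=
  Finset.univ.image (fun p : Fin n × (Fin n → Bool) =>
    insert (p.1, (0 : Fin 3)) (insert (p.1, (1 : Fin 3))
      ((Finset.univ.erase p.1).image
        (fun z => (z, if p.2 z then (0 : Fin 3) else (2 : Fin 3))))))

/-- The disjunctions t_1 ∨ ... ∨ t_n with t_i ∈ {t_{i1}, t_{i3}}. -/
def DnD3 (n : ℕ) : Finset (Finset (Fin n × Fin 3)) :=
  Finset.univ.image (fun g : Fin n → Bool =>
    Finset.univ.image (fun i : Fin n => (i, if g i then (0 : Fin 3) else (2 : Fin 3))))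

/-!
Each repair R contains t_{i2} or t_{i3} for every i, and if it misses t_{i1} and t_{i2} then
t_{i1} conflicts with some t_{j1} ∈ R, j ≠ i, so t_{j2} ∉ R and t_{j3} ∈ R: hence R is a model.
Conversely, choosing one of t_{z1}, t_{z3} for every z ≠ i turns the second family of
disjunctions into "t_{i1} ∨ t_{i2} ∨ (t_{z1} ∧ t_{z3} for some z ≠ i)". So a model either
contains every t_{i2}, or contains t_{z1}, t_{z3} for some z and then also the repair formed by
these two and, for each j ≠ z, whichever of t_{j2}, t_{j3} it holds. As repairs form an
antichain, the minimal models are exactly the repairs.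
-/

open Finset

lemma isRepairC_iff {α : Type*} [DecidableEq α] {V : Finset α} {G : α → α → Prop}
    {S : Finset α} :
    IsRepairC V G S ↔
      S ⊆ V ∧ ConflictFree G S ∧ ∀ x ∈ V, x ∉ S → G x x ∨ ∃ b ∈ S, G x b ∨ G b x := by
  refine ⟨fun ⟨hSV, hS, hmax⟩ => ⟨hSV, hS, fun x hxV hxS => ?_⟩,
    fun ⟨hSV, hS, hext⟩ => ⟨hSV, hS, fun S' hSS' hS'V hS' => ?_⟩⟩
  · by_contra! h
    refine hmax _ (ssubset_insert hxS) (insert_subset hxV hSV) ?_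
    simp only [ConflictFree, mem_insert, forall_eq_or_imp]
    exact ⟨⟨h.1, fun b hb => (h.2 b hb).1⟩, fun a ha => ⟨(h.2 a ha).2, hS a ha⟩⟩
  · obtain ⟨x, hxS', hxS⟩ := exists_of_ssubset hSS'
    rcases hext x (hS'V hxS') hxS with hxx | ⟨b, hb, hxb | hbx⟩
    · exact hS' x hxS' x hxS' hxx
    · exact hS' x hxS' b (hSS'.1 hb) hxb
    · exact hS' b (hSS'.1 hb) x hxS' hbx

lemma IsRepairC.not_ssubset {α : Type*} {V : Finset α} {G : α → α → Prop} {R R' : Finset α}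
    (hR : IsRepairC V G R) (hR' : IsRepairC V G R') : ¬ R ⊂ R' :=
  fun h => hR.2.2 R' h hR'.1 hR'.2.1

lemma isMinModel_iff_isRepairC {α : Type*} {D : Finset (Finset α)} {V : Finset α}
    {G : α → α → Prop}
    (h_model : ∀ R, IsRepairC V G R → IsModel D R)
    (h_sub : ∀ M, IsModel D M → ∃ R, IsRepairC V G R ∧ R ⊆ M) {M : Finset α} :
    IsMinModel D M ↔ IsRepairC V G M := by
  constructor
  · rintro ⟨hM, hmin⟩
    obtain ⟨R, hR, hRM⟩ := h_sub M hM
    obtain rfl : R = M := by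
      by_contra hne
      exact hmin R (ssubset_of_subset_of_ne hRM hne) (h_model R hR)
    exact hR
  · refine fun hM => ⟨h_model M hM, fun M' hM'M hM' => ?_⟩
    obtain ⟨R, hR, hRM'⟩ := h_sub M' hM'
    exact hR.not_ssubset hM (hRM'.trans_ssubset hM'M)

lemma isModel_union {α : Type*} [DecidableEq α] {D D' : Finset (Finset α)} {M : Finset α} :
    IsModel (D ∪ D') M ↔ IsModel D M ∧ IsModel D' M := by
  simp only [IsModel, mem_union, or_imp, forall_and]

lemma isModel_image {α ι : Type*} [DecidableEq α] {s : Finset ι} {f : ι → Finset α}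
    {M : Finset α} :
    IsModel (s.image f) M ↔ ∀ a ∈ s, ∃ t ∈ f a, t ∈ M := by
  simp only [IsModel, mem_image, forall_exists_index, and_imp, forall_apply_eq_imp_iff₂]

lemma forall_bool_exists_iff {α : Type*} {r : α → Bool → Prop} :
    (∀ b : α → Bool, ∃ z, r z (b z)) ↔ ∃ z, r z true ∧ r z false := by
  rw [← not_iff_not]
  push Not
  refine (Classical.skolem (p := fun z c => ¬ r z c)).symm.trans ?_
  simp only [Bool.exists_bool, ← not_and_or, not_and']

section ConfDn

variable {n : ℕ}

lemma confDn_iff {a b : Fin n × Fin 3} :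
    ConfDn n a b ↔
      (a.2 = 0 ∧ b.2 = 0 ∧ a.1 ≠ b.1) ∨ (a.1 = b.1 ∧ (a.2 = 1 ∨ b.2 = 1) ∧ a.2 ≠ b.2) := by
  unfold ConfDn
  omega

lemma confDn_comm {a b : Fin n × Fin 3} : ConfDn n a b ↔ ConfDn n b a := by
  simp only [confDn_iff]
  omega

lemma confDn_irrefl (a : Fin n × Fin 3) : ¬ ConfDn n a a := by
  simp [confDn_iff]

lemma isRepairC_univ_confDn_iff {S : Finset (Fin n × Fin 3)} :
    IsRepairC univ (ConfDn n) S ↔ ConflictFree (ConfDn n) S ∧ ∀ x ∉ S, ∃ b ∈ S, ConfDn n x b := by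
  simp only [isRepairC_iff, subset_univ, mem_univ, forall_const, true_and, confDn_irrefl,
    false_or]
  simp only [confDn_comm, or_self]

lemma isModel_dnD1_iff {M : Finset (Fin n × Fin 3)} :
    IsModel (DnD1 n) M ↔ ∀ i, (i, 1) ∈ M ∨ (i, 2) ∈ M := by
  simp [DnD1, isModel_image]

lemma isModel_dnD2_iff {M : Finset (Fin n × Fin 3)} :
    IsModel (DnD2 n) M ↔ ∀ i, (i, 0) ∈ M ∨ (i, 1) ∈ M ∨ ∃ z ≠ i, (z, 0) ∈ M ∧ (z, 2) ∈ M := by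
  simp only [DnD2, isModel_image, mem_univ, true_implies, Prod.forall, exists_mem_insert,
    exists_mem_image, mem_erase, and_true]
  refine forall_congr' fun i => ?_
  simp only [forall_or_left]
  refine or_congr_right (or_congr_right ?_)
  rw [forall_bool_exists_iff (r := fun z c => z ≠ i ∧ (z, if c then 0 else 2) ∈ M)]
  simp only [if_true, Bool.false_eq_true, if_false]
  exact exists_congr fun z => by tauto

lemma mem_repA {x : Fin n × Fin 3} : x ∈ repA n ↔ x.2 = 1 := by
  simp [repA, Prod.ext_iff, eq_comm]

lemma mem_repB {i j : Fin n} {f : Fin n → Fin 3} {k : Fin 3} :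
    (j, k) ∈ repB n i f ↔ (j = i ∧ (k = 0 ∨ k = 2)) ∨ (j ≠ i ∧ k = f j) := by
  simp only [repB, mem_insert, mem_image, mem_erase, mem_univ, and_true, Prod.ext_iff]
  grind

lemma repA_isRepairC : IsRepairC univ (ConfDn n) (repA n) := by
  refine isRepairC_univ_confDn_iff.2 ⟨fun a ha b hb => ?_, fun x hx => ⟨(x.1, 1), ?_, ?_⟩⟩
  · rw [mem_repA] at ha hb
    rw [confDn_iff]
    omega
  · simp [mem_repA]
  · rw [mem_repA] at hx
    simp [confDn_iff, hx]

lemma repB_isRepairC {i : Fin n} {f : Fin n → Fin 3} (hf : ∀ j ≠ i, f j ≠ 0) :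
    IsRepairC univ (ConfDn n) (repB n i f) := by
  refine isRepairC_univ_confDn_iff.2 ⟨?_, ?_⟩
  · rintro ⟨j, k⟩ ha ⟨j', k'⟩ hb
    rw [mem_repB] at ha hb
    rw [confDn_iff]
    grind
  · rintro ⟨j, k⟩ hx
    rw [mem_repB] at hx
    by_cases h : j ≠ i ∧ k ≠ 0
    · refine ⟨(j, f j), mem_repB.2 (Or.inr ⟨h.1, rfl⟩), ?_⟩
      rw [confDn_iff]
      grind
    · refine ⟨(i, 0), mem_repB.2 (Or.inl ⟨rfl, Or.inl rfl⟩), ?_⟩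
      rw [confDn_iff]
      grind

lemma IsRepairC.mem_one_or_mem_two {R : Finset (Fin n × Fin 3)}
    (hR : IsRepairC univ (ConfDn n) R) (i : Fin n) : (i, 1) ∈ R ∨ (i, 2) ∈ R := by
  by_contra! h
  obtain ⟨b, hb, hconf⟩ := (isRepairC_univ_confDn_iff.1 hR).2 (i, 2) h.2
  obtain rfl : b = (i, 1) := by
    rw [confDn_iff] at hconf
    ext <;> simp only at hconf ⊢ <;> omega
  exact h.1 hb

lemma IsRepairC.mem_zero_or_mem_one_or_exists {R : Finset (Fin n × Fin 3)}
    (hR : IsRepairC univ (ConfDn n) R) (i : Fin n) :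
    (i, 0) ∈ R ∨ (i, 1) ∈ R ∨ ∃ z ≠ i, (z, 0) ∈ R ∧ (z, 2) ∈ R := by
  by_contra! h
  obtain ⟨⟨z, k⟩, hb, hconf⟩ := (isRepairC_univ_confDn_iff.1 hR).2 (i, 0) h.1
  simp only [confDn_iff] at hconf
  obtain ⟨rfl, hzi⟩ : k = 0 ∧ z ≠ i := by
    rcases hconf with hconf | ⟨rfl, hconf⟩
    · exact ⟨hconf.2.1, Ne.symm hconf.2.2⟩
    · obtain rfl : k = 1 := by omega
      exact absurd hb h.2.1
  have hz1 : (z, 1) ∉ R := fun hz1 => hR.2.1 _ hb _ hz1 (by simp [confDn_iff])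
  exact h.2.2 z hzi hb ((hR.mem_one_or_mem_two z).resolve_left hz1)

lemma IsRepairC.isModel {R : Finset (Fin n × Fin 3)} (hR : IsRepairC univ (ConfDn n) R) :
    IsModel (DnD1 n ∪ DnD2 n) R := by
  rw [isModel_union, isModel_dnD1_iff, isModel_dnD2_iff]
  exact ⟨hR.mem_one_or_mem_two, hR.mem_zero_or_mem_one_or_exists⟩

lemma IsModel.exists_isRepairC_subset {M : Finset (Fin n × Fin 3)}
    (hM : IsModel (DnD1 n ∪ DnD2 n) M) : ∃ R, IsRepairC univ (ConfDn n) R ∧ R ⊆ M := by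
  rw [isModel_union, isModel_dnD1_iff, isModel_dnD2_iff] at hM
  obtain ⟨hM₁, hM₂⟩ := hM
  have h_repB {z : Fin n} (h0 : (z, 0) ∈ M) (h2 : (z, 2) ∈ M) :
      ∃ R, IsRepairC univ (ConfDn n) R ∧ R ⊆ M := by
    refine ⟨repB n z fun j => if (j, 1) ∈ M then 1 else 2,
      repB_isRepairC fun j _ => by split_ifs <;> decide, ?_⟩
    rintro ⟨j, k⟩ hx
    rw [mem_repB] at hx
    rcases hx with ⟨rfl, rfl | rfl⟩ | ⟨-, rfl⟩
    · exact h0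
    · exact h2
    · split_ifs with h
      exacts [h, (hM₁ j).resolve_left h]
  by_cases hA : ∀ i, (i, 1) ∈ M
  · refine ⟨repA n, repA_isRepairC, fun x hx => ?_⟩
    rw [mem_repA] at hx
    simpa [← hx] using hA x.1
  · push Not at hA
    obtain ⟨i, hi1⟩ := hA
    have hi2 := (hM₁ i).resolve_left hi1
    rcases hM₂ i with hi0 | hi1' | ⟨z, -, hz0, hz2⟩
    exacts [h_repB hi0 hi2, absurd hi1' hi1, h_repB hz0 hz2]

end ConfDn

theorem stmt13 (n : ℕ) :
    ∀ M : Finset (Fin n × Fin 3),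
      IsMinModel (DnD1 n ∪ DnD2 n) M ↔ IsRepairC Finset.univ (ConfDn n) M := by
  exact fun _ =>
    isMinModel_iff_isRepairC (fun _ => IsRepairC.isModel) (fun _ => IsModel.exists_isRepairC_subset)
end
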